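/- Let v, w, t ∈ Q and let 1 ≤ i, k, p ≤ m with k ≠ p. Then the triple commutator [E*_{i,v}, [E_{k,w}, E_{p,t}]] acts on M as follows: (1) if i = p, it sends (z,x,f) to (z − f(x_k)·⟨t,w⟩·v, x + (⟨v,z⟩ + f_p(x)·q(v) − f(x_k)·⟨t,w⟩·q(v))·⟨t,w⟩·x_k, f − f(x_k)·⟨t,w⟩·q(v)·f_p); (2) if i = k, it sends (z,x,f) to (z + f(x_p)·⟨t,w⟩·v, x − (⟨v,z⟩ + f_k(x)·q(v) + f(x_p)·⟨t,w⟩·q(v))·⟨t,w⟩·x_p, f + f(x_p)·⟨t,w⟩·q(v)·f_k); (3) if i ≠ p and i ≠ k, it is the identity automorphism of M. -/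

import Mathlib

open QuadraticMap
open scoped commutatorElement

/-- The DSER elementary orthogonal transformation `E_{i,w}` on `M = Q ⊕ P ⊕ P*`,
`P = A^m`:  `E_{i,w}(z,x,f) = (z − f(xᵢ)•w, x + ⟨w,z⟩•xᵢ − f(xᵢ)·q(w)•xᵢ, f)`. -/
noncomputable def Eplus {A Q : Type*} [CommRing A] [AddCommGroup Q] [Module A Q]
    {m : ℕ} (q : QuadraticForm A Q) (i : Fin m) (w : Q) :
    (Q × (Fin m → A) × (Fin m → A)) ≃ₗ[A] (Q × (Fin m → A) × (Fin m → A)) where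
  toFun p := (p.1 - p.2.2 i • w,
    p.2.1 + polar ⇑q w p.1 • (Pi.single i 1 : Fin m → A)
      - (p.2.2 i * q w) • (Pi.single i 1 : Fin m → A),
    p.2.2)
  invFun p := (p.1 + p.2.2 i • w,
    p.2.1 - polar ⇑q w p.1 • (Pi.single i 1 : Fin m → A)
      - (p.2.2 i * q w) • (Pi.single i 1 : Fin m → A),
    p.2.2)
  map_add' p p' := by
    obtain ⟨z, x, f⟩ := p
    obtain ⟨z', x', f'⟩ := p'
    refine Prod.ext ?_ (Prod.ext ?_ rfl)
    · show z + z' - (f i + f' i) • w = (z - f i • w) + (z' - f' i • w)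
      module
    · show x + x' + polar ⇑q w (z + z') • (Pi.single i 1 : Fin m → A)
        - ((f i + f' i) * q w) • (Pi.single i 1 : Fin m → A) = _
      rw [polar_add_right]
      show _ = (x + polar ⇑q w z • (Pi.single i 1 : Fin m → A) - (f i * q w) • (Pi.single i 1 : Fin m → A))
        + (x' + polar ⇑q w z' • (Pi.single i 1 : Fin m → A) - (f' i * q w) • (Pi.single i 1 : Fin m → A))
      module
  map_smul' a p := by
    obtain ⟨z, x, f⟩ := p
    refine Prod.ext ?_ (Prod.ext ?_ rfl)
    · show a • z - (a • f) i • w = a • (z - f i • w)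
      simp only [Pi.smul_apply, smul_eq_mul]
      module
    · show a • x + polar ⇑q w (a • z) • (Pi.single i 1 : Fin m → A)
        - ((a • f) i * q w) • (Pi.single i 1 : Fin m → A)
        = a • (x + polar ⇑q w z • (Pi.single i 1 : Fin m → A) - (f i * q w) • (Pi.single i 1 : Fin m → A))
      rw [polar_smul_right]
      simp only [Pi.smul_apply, smul_eq_mul]
      module
  left_inv p := by
    obtain ⟨z, x, f⟩ := p
    refine Prod.ext ?_ (Prod.ext ?_ rfl)
    · show z - f i • w + f i • w = z
      module
    · show x + polar ⇑q w z • (Pi.single i 1 : Fin m → A) - (f i * q w) • (Pi.single i 1 : Fin m → A)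
        - polar ⇑q w (z - f i • w) • (Pi.single i 1 : Fin m → A)
        - (f i * q w) • (Pi.single i 1 : Fin m → A) = x
      rw [polar_sub_right, polar_smul_right, polar_self]
      simp only [smul_eq_mul]
      module
  right_inv p := by
    obtain ⟨z, x, f⟩ := p
    refine Prod.ext ?_ (Prod.ext ?_ rfl)
    · show z + f i • w - f i • w = z
      module
    · show x - polar ⇑q w z • (Pi.single i 1 : Fin m → A) - (f i * q w) • (Pi.single i 1 : Fin m → A)
        + polar ⇑q w (z + f i • w) • (Pi.single i 1 : Fin m → A)
        - (f i * q w) • (Pi.single i 1 : Fin m → A) = x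
      rw [polar_add_right, polar_smul_right, polar_self]
      simp only [smul_eq_mul]
      module

/-- The DSER elementary orthogonal transformation `E*_{i,w}` on `M = Q ⊕ P ⊕ P*`:
`E*_{i,w}(z,x,f) = (z − fᵢ(x)•w, x, f + ⟨w,z⟩•fᵢ − fᵢ(x)·q(w)•fᵢ)`. -/
noncomputable def Estar {A Q : Type*} [CommRing A] [AddCommGroup Q] [Module A Q]
    {m : ℕ} (q : QuadraticForm A Q) (i : Fin m) (w : Q) :
    (Q × (Fin m → A) × (Fin m → A)) ≃ₗ[A] (Q × (Fin m → A) × (Fin m → A)) where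
  toFun p := (p.1 - p.2.1 i • w,
    p.2.1,
    p.2.2 + polar ⇑q w p.1 • (Pi.single i 1 : Fin m → A)
      - (p.2.1 i * q w) • (Pi.single i 1 : Fin m → A))
  invFun p := (p.1 + p.2.1 i • w,
    p.2.1,
    p.2.2 - polar ⇑q w p.1 • (Pi.single i 1 : Fin m → A)
      - (p.2.1 i * q w) • (Pi.single i 1 : Fin m → A))
  map_add' p p' := by
    obtain ⟨z, x, f⟩ := p
    obtain ⟨z', x', f'⟩ := p'
    refine Prod.ext ?_ (Prod.ext rfl ?_)
    · show z + z' - (x i + x' i) • w = (z - x i • w) + (z' - x' i • w)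
      module
    · show f + f' + polar ⇑q w (z + z') • (Pi.single i 1 : Fin m → A)
        - ((x i + x' i) * q w) • (Pi.single i 1 : Fin m → A) = _
      rw [polar_add_right]
      show _ = (f + polar ⇑q w z • (Pi.single i 1 : Fin m → A)
          - (x i * q w) • (Pi.single i 1 : Fin m → A))
        + (f' + polar ⇑q w z' • (Pi.single i 1 : Fin m → A)
          - (x' i * q w) • (Pi.single i 1 : Fin m → A))
      module
  map_smul' a p := by
    obtain ⟨z, x, f⟩ := p
    refine Prod.ext ?_ (Prod.ext rfl ?_)
    · show a • z - (a • x) i • w = a • (z - x i • w)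
      simp only [Pi.smul_apply, smul_eq_mul]
      module
    · show a • f + polar ⇑q w (a • z) • (Pi.single i 1 : Fin m → A)
        - ((a • x) i * q w) • (Pi.single i 1 : Fin m → A)
        = a • (f + polar ⇑q w z • (Pi.single i 1 : Fin m → A)
          - (x i * q w) • (Pi.single i 1 : Fin m → A))
      rw [polar_smul_right]
      simp only [Pi.smul_apply, smul_eq_mul]
      module
  left_inv p := by
    obtain ⟨z, x, f⟩ := p
    refine Prod.ext ?_ (Prod.ext rfl ?_)
    · show z - x i • w + x i • w = z
      module
    · show f + polar ⇑q w z • (Pi.single i 1 : Fin m → A)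
        - (x i * q w) • (Pi.single i 1 : Fin m → A)
        - polar ⇑q w (z - x i • w) • (Pi.single i 1 : Fin m → A)
        - (x i * q w) • (Pi.single i 1 : Fin m → A) = f
      rw [polar_sub_right, polar_smul_right, polar_self]
      simp only [smul_eq_mul]
      module
  right_inv p := by
    obtain ⟨z, x, f⟩ := p
    refine Prod.ext ?_ (Prod.ext rfl ?_)
    · show z + x i • w - x i • w = z
      module
    · show f - polar ⇑q w z • (Pi.single i 1 : Fin m → A)
        - (x i * q w) • (Pi.single i 1 : Fin m → A)
        + polar ⇑q w (z + x i • w) • (Pi.single i 1 : Fin m → A)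
        - (x i * q w) • (Pi.single i 1 : Fin m → A) = f
      rw [polar_add_right, polar_smul_right, polar_self]
      simp only [smul_eq_mul]
      module

/-!
The commutator `[E_{k,w}, E_{p,t}]` fixes `z` and `f` and adds `⟨t,w⟩ (f_k x_p − f_p x_k)` to `x`.
When `i ∉ {k, p}` it commutes with `E*_{i,v}`, which reads only the coordinate `x_i` and changes
only `z` and the coordinate `f_i`. For `i = p` the triple commutator is a direct computation, and
the case `i = k` reduces to it because `[E_{k,w}, E_{p,t}] = [E_{p,t}, E_{k,−w}]`.
-/

lemma LinearEquiv.commutatorElement_apply {R M : Type*} [Semiring R] [AddCommMonoid M]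
    [Module R M] (g h : M ≃ₗ[R] M) (X : M) : ⁅g, h⁆ X = g (h (g⁻¹ (h⁻¹ X))) :=
  rfl

section ElementaryOrthogonal

variable {A Q : Type*} [CommRing A] [AddCommGroup Q] [Module A Q] {m : ℕ}
  (q : QuadraticForm A Q)

lemma Eplus_apply (i : Fin m) (w z : Q) (x f : Fin m → A) :
    Eplus q i w (z, x, f)
      = (z - f i • w, x + polar q w z • Pi.single i 1 - (f i * q w) • Pi.single i 1, f) :=
  rfl

lemma Eplus_inv_apply (i : Fin m) (w z : Q) (x f : Fin m → A) :
    (Eplus q i w)⁻¹ (z, x, f)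
      = (z + f i • w, x - polar q w z • Pi.single i 1 - (f i * q w) • Pi.single i 1, f) :=
  rfl

lemma Estar_apply (i : Fin m) (w z : Q) (x f : Fin m → A) :
    Estar q i w (z, x, f)
      = (z - x i • w, x, f + polar q w z • Pi.single i 1 - (x i * q w) • Pi.single i 1) :=
  rfl

lemma Estar_inv_apply (i : Fin m) (w z : Q) (x f : Fin m → A) :
    (Estar q i w)⁻¹ (z, x, f)
      = (z + x i • w, x, f - polar q w z • Pi.single i 1 - (x i * q w) • Pi.single i 1) :=
  rfl

lemma commutator_Eplus_Eplus_apply (k p : Fin m) (w t z : Q) (x f : Fin m → A) :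
    ⁅Eplus q k w, Eplus q p t⁆ (z, x, f)
      = (z, x + (f k * polar q t w) • Pi.single p 1 - (f p * polar q t w) • Pi.single k 1, f) := by
  simp only [LinearEquiv.commutatorElement_apply, Eplus_inv_apply, Eplus_apply, Prod.mk.injEq,
    and_true]
  constructor
  · module
  · simp only [polar_add_right, polar_sub_right, polar_smul_right, polar_self, polar_comm q w t,
      smul_eq_mul, nsmul_eq_mul]
    module

lemma commutator_Eplus_Eplus_eq_swap (k p : Fin m) (w t : Q) :
    ⁅Eplus q k w, Eplus q p t⁆ = ⁅Eplus q p t, Eplus q k (-w)⁆ := by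
  ext ⟨z, x, f⟩ : 1
  simp only [commutator_Eplus_Eplus_apply, polar_neg_left, polar_comm q w t, Prod.mk.injEq,
    and_true, true_and]
  module

lemma commute_Estar_commutator_Eplus_Eplus {i k p : Fin m} (hik : i ≠ k) (hip : i ≠ p)
    (v w t : Q) : Commute (Estar q i v) ⁅Eplus q k w, Eplus q p t⁆ := by
  refine LinearEquiv.ext fun ⟨z, x, f⟩ => ?_
  simp [commutator_Eplus_Eplus_apply, Estar_apply, Pi.single_eq_of_ne hik,
    Pi.single_eq_of_ne hip, Pi.single_eq_of_ne hik.symm, Pi.single_eq_of_ne hip.symm]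

lemma commutator_Estar_commutator_Eplus_Eplus_apply {k p : Fin m} (hkp : k ≠ p)
    (v w t z : Q) (x f : Fin m → A) :
    ⁅Estar q p v, ⁅Eplus q k w, Eplus q p t⁆⁆ (z, x, f)
      = (z - (f k * polar q t w) • v,
         x + ((polar q v z + x p * q v - f k * polar q t w * q v) * polar q t w) • Pi.single k 1,
         f - (f k * polar q t w * q v) • Pi.single p 1) := by
  rw [LinearEquiv.commutatorElement_apply, commutatorElement_inv, commutator_Eplus_Eplus_apply,
    Estar_inv_apply, commutator_Eplus_Eplus_apply, Estar_apply]
  simp only [Pi.add_apply, Pi.sub_apply, Pi.smul_apply, Pi.single_eq_same,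
    Pi.single_eq_of_ne hkp, Pi.single_eq_of_ne hkp.symm, smul_eq_mul, mul_one, mul_zero,
    add_zero, sub_zero, sub_add_cancel, polar_add_right, polar_smul_right, polar_self,
    polar_comm q w t, nsmul_eq_mul, Nat.cast_ofNat, Prod.mk.injEq]
  refine ⟨?_, ?_, ?_⟩ <;> module

end ElementaryOrthogonal

theorem triple_commutator_Estar_EplusEplus_general
    {A Q : Type*} [CommRing A] [AddCommGroup Q] [Module A Q]
    {m : ℕ} (q : QuadraticForm A Q) (i k p : Fin m) (hkp : k ≠ p)
    (v w t : Q) :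
    (i = p → ∀ (z : Q) (x f : Fin m → A),
      ⁅Estar q i v, ⁅Eplus q k w, Eplus q p t⁆⁆ (z, x, f)
        = (z - (f k * polar ⇑q t w) • v,
           x + ((polar ⇑q v z + x p * q v - f k * polar ⇑q t w * q v)
               * polar ⇑q t w) • (Pi.single k 1 : Fin m → A),
           f - (f k * polar ⇑q t w * q v) • (Pi.single p 1 : Fin m → A))) ∧
    (i = k → ∀ (z : Q) (x f : Fin m → A),
      ⁅Estar q i v, ⁅Eplus q k w, Eplus q p t⁆⁆ (z, x, f)
        = (z + (f p * polar ⇑q t w) • v,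
           x - ((polar ⇑q v z + x k * q v + f p * polar ⇑q t w * q v)
               * polar ⇑q t w) • (Pi.single p 1 : Fin m → A),
           f + (f p * polar ⇑q t w * q v) • (Pi.single k 1 : Fin m → A))) ∧
    (i ≠ p → i ≠ k → ⁅Estar q i v, ⁅Eplus q k w, Eplus q p t⁆⁆ = 1) := by
  refine ⟨?_, ?_, fun hip hik =>
    commutatorElement_eq_one_iff_commute.2 (commute_Estar_commutator_Eplus_Eplus q hik hip v w t)⟩
  · rintro rfl z x f
    exact commutator_Estar_commutator_Eplus_Eplus_apply q hkp v w t z x f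
  · rintro rfl z x f
    rw [commutator_Eplus_Eplus_eq_swap, commutator_Estar_commutator_Eplus_Eplus_apply q hkp.symm]
    simp only [polar_neg_left, polar_comm q w t, Prod.mk.injEq]
    refine ⟨?_, ?_, ?_⟩ <;> module

theorem triple_commutator_Estar_EplusEplus
    {A Q : Type*} [CommRing A] [Invertible (2 : A)] [AddCommGroup Q] [Module A Q]
    {m : ℕ} (q : QuadraticForm A Q) (i k p : Fin m) (hkp : k ≠ p)
    (v w t : Q) :
    (i = p → ∀ (z : Q) (x f : Fin m → A),
      ⁅Estar q i v, ⁅Eplus q k w, Eplus q p t⁆⁆ (z, x, f)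
        = (z - (f k * polar ⇑q t w) • v,
           x + ((polar ⇑q v z + x p * q v - f k * polar ⇑q t w * q v)
               * polar ⇑q t w) • (Pi.single k 1 : Fin m → A),
           f - (f k * polar ⇑q t w * q v) • (Pi.single p 1 : Fin m → A))) ∧
    (i = k → ∀ (z : Q) (x f : Fin m → A),
      ⁅Estar q i v, ⁅Eplus q k w, Eplus q p t⁆⁆ (z, x, f)
        = (z + (f p * polar ⇑q t w) • v,
           x - ((polar ⇑q v z + x k * q v + f p * polar ⇑q t w * q v)
               * polar ⇑q t w) • (Pi.single p 1 : Fin m → A),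
           f + (f p * polar ⇑q t w * q v) • (Pi.single k 1 : Fin m → A))) ∧
    (i ≠ p → i ≠ k → ⁅Estar q i v, ⁅Eplus q k w, Eplus q p t⁆⁆ = 1) :=
  triple_commutator_Estar_EplusEplus_general q i k p hkp v w t
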